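/- arXiv:1907.13544 — 2 statements merged into one kernel-verified Lean document; each statement's English description precedes it below -/
import Mathlib

section
/- Let f(ρ)=ρ(1-ρ) and a:ℝ→ℝ be C². Under the CFL condition λ‖a‖_∞‖f'‖_∞ ≤ 1, one step of the Lax-Friedrichs scheme ρ_i^{j+1} = (ρ_{i+1}^j+ρ_{i-1}^j)/2 - (λ/2)(a_{i+1}f(ρ_{i+1}^j) - a_{i-1}f(ρ_{i-1}^j)) satisfies the sup-norm bound ‖ρ^{j+1}‖_∞ ≤ ‖ρ^j‖_∞ + Δt ‖f‖_∞ ‖a'‖_∞. -/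
/-!
Write `p = ρ_{i+1}`, `q = ρ_{i-1}` and split the flux difference as
`a_{i+1} (f p - f q) + (a_{i+1} - a_{i-1}) f q`. For the quadratic flux the mean value theorem
is exact at the midpoint, `f p - f q = f'((p+q)/2) (p - q)`, so the first part turns the scheme
into the convex combination `(1-μ)/2 p + (1+μ)/2 q` with `μ = λ a_{i+1} f'((p+q)/2)`, and
`|μ| ≤ 1` is the CFL condition. The second part is a source term of size at most
`(λ/2) ‖a'‖_∞ 2Δx ‖f‖_∞ = Δt ‖f‖_∞ ‖a'‖_∞`.
-/

open Set

theorem logistic_sub_eq_deriv_mul {f : ℝ → ℝ} (hf : ∀ r, f r = r * (1 - r)) (p q : ℝ) :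
    f p - f q = deriv f ((p + q) / 2) * (p - q) := by
  have hderiv : ∀ x, HasDerivAt f (1 * (1 - x) + x * (0 - 1)) x := fun x => by
    rw [show f = fun r => r * (1 - r) from funext hf]
    exact (hasDerivAt_id x).mul ((hasDerivAt_const x 1).sub (hasDerivAt_id x))
  rw [(hderiv _).deriv, hf, hf]
  ring

theorem abs_sub_le_mul_of_abs_deriv_le {g : ℝ → ℝ} {C : ℝ} (hg : Differentiable ℝ g)
    (hC : ∀ x, |deriv g x| ≤ C) (x y : ℝ) : |g x - g y| ≤ C * |x - y| := by
  simpa only [Real.norm_eq_abs] using convex_univ.norm_image_sub_le_of_norm_deriv_le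
    (fun z _ => hg z) (fun z _ => (Real.norm_eq_abs _).trans_le (hC z)) (mem_univ y) (mem_univ x)

theorem abs_laxFriedrichs_le {S lam p q ap am fp fq c : ℝ} (hp : |p| ≤ S) (hq : |q| ≤ S)
    (hflux : fp - fq = c * (p - q)) (hcfl : |lam * ap * c| ≤ 1) :
    |(p + q) / 2 - lam / 2 * (ap * fp - am * fq)| ≤ S + |lam / 2 * (ap - am) * fq| := by
  set μ := lam * ap * c
  have hsplit : (p + q) / 2 - lam / 2 * (ap * fp - am * fq)
      = ((1 - μ) / 2 * p + (1 + μ) / 2 * q) - lam / 2 * (ap - am) * fq := by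
    rw [show fp = fq + c * (p - q) by linarith]
    ring
  obtain ⟨hμ_lower, hμ_upper⟩ := abs_le.1 hcfl
  have hconv : |(1 - μ) / 2 * p + (1 + μ) / 2 * q| ≤ S :=
    abs_le.2 <| convex_Icc (-S) S (abs_le.1 hp) (abs_le.1 hq)
      (a := (1 - μ) / 2) (b := (1 + μ) / 2)
      (by linarith) (by linarith) (by ring)
  rw [hsplit]
  exact (abs_sub _ _).trans (add_le_add_left hconv _)

/-- Under the CFL condition, one step of the Lax-Friedrichs scheme for
`ρ_t + (a(x) f(ρ))_x = 0` with the LWR flux `f(ρ) = ρ(1-ρ)` satisfies the sup-norm bound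
`‖ρ^{j+1}‖_∞ ≤ ‖ρ^j‖_∞ + Δt ‖f‖_∞ ‖a'‖_∞`. -/
theorem stmt0
    (f a : ℝ → ℝ) (hf : ∀ r : ℝ, f r = r * (1 - r)) (ha : ContDiff ℝ 2 a)
    (Δt Δx lam : ℝ) (hΔt : 0 < Δt) (hΔx : 0 < Δx) (hlam : lam = Δt / Δx)
    (S Ca Ca' Cf Cf' : ℝ)
    (hCa : ∀ x : ℝ, |a x| ≤ Ca)
    (hCa' : ∀ x : ℝ, |deriv a x| ≤ Ca')
    (hCf : ∀ r : ℝ, |r| ≤ S → |f r| ≤ Cf)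
    (hCf' : ∀ r : ℝ, |r| ≤ S → |deriv f r| ≤ Cf')
    (CFL : lam * Ca * Cf' ≤ 1)
    (ρ ρ' : ℤ → ℝ) (hbd : ∀ i : ℤ, |ρ i| ≤ S)
    (hscheme : ∀ i : ℤ, ρ' i =
      (ρ (i + 1) + ρ (i - 1)) / 2
        - lam / 2 * (a (((i : ℝ) + 1) * Δx) * f (ρ (i + 1))
            - a (((i : ℝ) - 1) * Δx) * f (ρ (i - 1)))) :
    ∀ i : ℤ, |ρ' i| ≤ S + Δt * Cf * Ca' := by
  have hlam0 : 0 ≤ lam := hlam ▸ by positivity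
  have hCa0 : 0 ≤ Ca := (abs_nonneg _).trans (hCa 0)
  have hCa'0 : 0 ≤ Ca' := (abs_nonneg _).trans (hCa' 0)
  intro i
  have hmid : |(ρ (i + 1) + ρ (i - 1)) / 2| ≤ S := by
    obtain ⟨hp, hp'⟩ := abs_le.1 (hbd (i + 1))
    obtain ⟨hq, hq'⟩ := abs_le.1 (hbd (i - 1))
    exact abs_le.2 ⟨by linarith, by linarith⟩
  have hcfl :
      |lam * a (((i : ℝ) + 1) * Δx) * deriv f ((ρ (i + 1) + ρ (i - 1)) / 2)| ≤ 1 := by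
    rw [abs_mul, abs_mul, abs_of_nonneg hlam0]
    calc _ ≤ lam * Ca * Cf' := by gcongr; exacts [hCa _, hCf' _ hmid]
      _ ≤ 1 := CFL
  have hsource :
      |lam / 2 * (a (((i : ℝ) + 1) * Δx) - a (((i : ℝ) - 1) * Δx)) * f (ρ (i - 1))|
        ≤ Δt * Cf * Ca' := by
    have hgap := abs_sub_le_mul_of_abs_deriv_le (ha.differentiable (by norm_num)) hCa'
      (((i : ℝ) + 1) * Δx) (((i : ℝ) - 1) * Δx)
    rw [show ((i : ℝ) + 1) * Δx - ((i : ℝ) - 1) * Δx = 2 * Δx by ring,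
      abs_of_pos (by positivity : (0 : ℝ) < 2 * Δx)] at hgap
    rw [abs_mul, abs_mul, abs_of_nonneg (by positivity : (0 : ℝ) ≤ lam / 2)]
    calc _ ≤ lam / 2 * (Ca' * (2 * Δx)) * Cf := by gcongr; exact hCf _ (hbd _)
      _ = Δt * Cf * Ca' := by rw [hlam]; field_simp
  rw [hscheme i]
  exact (abs_laxFriedrichs_le (hbd _) (hbd _) (logistic_sub_eq_deriv_mul hf _ _) hcfl).trans
    (add_le_add_right hsource _)
end

section
/- Under the CFL condition λ‖a‖_∞‖f'‖_∞ ≤ 1 and with f ≥ 0, one step of the Lax-Friedrichs scheme satisfies Σ_{i∈ℤ} |ρ_i^{j+1} - ρ_i^j| ≤ TV(ρ^j) + λ Δx Σ_{i∈ℤ} f(ρ_i^j)|a'(η_{i+1/2})|, and hence Σ_{i∈ℤ}|ρ_i^{j+1} - ρ_i^j| ≤ TV(ρ^j) + λ ‖f'‖_∞ ‖a'‖_{L¹} when f(0)=0. -/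
/-!
Write `θᵢ` for the difference quotient of `f` between `ρᵢ` and `ρᵢ₊₁` and
`wᵢ = (1 - λ aᵢ₊₁ θᵢ) / 2`. Then one Lax-Friedrichs step is
`ρᵢʲ⁺¹ - ρᵢʲ = wᵢ Δᵢ - (1 - wᵢ₋₁) Δᵢ₋₁ - (λ/2) ((aᵢ₊₁ - aᵢ) f(ρᵢ) + (aᵢ - aᵢ₋₁) f(ρᵢ₋₁))`
with `Δᵢ = ρᵢ₊₁ - ρᵢ`. The CFL condition gives `wᵢ ∈ [0, 1]`, so after summing over `i` the
first two terms contribute exactly `Σ |Δᵢ| = TV(ρ)`. Since `0 ≤ f(ρ) ≤ ‖f'‖_∞` on `[0, 1]`,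
the rest is at most `λ ‖f'‖_∞ Σ |aᵢ₊₁ - aᵢ|`, and `|aᵢ₊₁ - aᵢ|` is bounded by the integral of
`|a'|` over the cell `(iΔx, (i+1)Δx]`; these cells partition `ℝ`.
-/

open MeasureTheory Set

section Lipschitz

variable {f : ℝ → ℝ} {C : ℝ}

theorem abs_sub_le_of_abs_deriv_le (hf : Differentiable ℝ f) (hC : ∀ r, |deriv f r| ≤ C)
    (x y : ℝ) : |f x - f y| ≤ C * |x - y| :=
  convex_univ.norm_image_sub_le_of_norm_deriv_le (fun r _ => hf r) (fun r _ => hC r)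
    (mem_univ y) (mem_univ x)

theorem abs_slope_le_of_abs_deriv_le (hf : Differentiable ℝ f) (hC : ∀ r, |deriv f r| ≤ C)
    (x y : ℝ) : |slope f x y| ≤ C := by
  rw [slope_def_field, abs_div]
  exact div_le_of_le_mul₀ (abs_nonneg _) ((abs_nonneg _).trans (hC 0))
    (abs_sub_le_of_abs_deriv_le hf hC y x)

end Lipschitz

section LaxFriedrichs

variable (lam : ℝ) (A : ℤ → ℝ) (f : ℝ → ℝ) (ρ : ℤ → ℝ)

/-- `A i` stands for `a (i Δx)` and `lam` for `Δt / Δx`. -/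
noncomputable def laxFriedrichsStep (i : ℤ) : ℝ :=
  (ρ (i + 1) + ρ (i - 1)) / 2 - lam / 2 * (A (i + 1) * f (ρ (i + 1)) - A (i - 1) * f (ρ (i - 1)))

noncomputable def laxFriedrichsWeight (i : ℤ) : ℝ :=
  (1 - lam * A (i + 1) * slope f (ρ i) (ρ (i + 1))) / 2

theorem laxFriedrichsStep_sub_eq (i : ℤ) :
    laxFriedrichsStep lam A f ρ i - ρ i =
      laxFriedrichsWeight lam A f ρ i * (ρ (i + 1) - ρ i)
        - (1 - laxFriedrichsWeight lam A f ρ (i - 1)) * (ρ i - ρ (i - 1))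
        - lam / 2 * ((A (i + 1) - A i) * f (ρ i) + (A i - A (i - 1)) * f (ρ (i - 1))) := by
  have hθ := sub_smul_slope f (ρ i) (ρ (i + 1))
  have hθ' := sub_smul_slope f (ρ (i - 1)) (ρ i)
  simp only [smul_eq_mul, vsub_eq_sub] at hθ hθ'
  simp only [laxFriedrichsStep, laxFriedrichsWeight, sub_add_cancel]
  linear_combination (lam / 2 * A (i + 1)) * hθ + (lam / 2 * A i) * hθ'

variable {lam A f ρ}

theorem laxFriedrichsWeight_mem_Icc {Ca Cf : ℝ} (hlam : 0 ≤ lam) (hA : ∀ i, |A i| ≤ Ca)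
    (hf : Differentiable ℝ f) (hCf : ∀ r, |deriv f r| ≤ Cf) (CFL : lam * Ca * Cf ≤ 1) (i : ℤ) :
    laxFriedrichsWeight lam A f ρ i ∈ Icc 0 1 := by
  have hCa : 0 ≤ Ca := (abs_nonneg _).trans (hA 0)
  have hcfl : |lam * A (i + 1) * slope f (ρ i) (ρ (i + 1))| ≤ 1 := by
    rw [abs_mul, abs_mul, abs_of_nonneg hlam]
    calc lam * |A (i + 1)| * |slope f (ρ i) (ρ (i + 1))| ≤ lam * Ca * Cf := by
          gcongr
          · exact hA _
          · exact abs_slope_le_of_abs_deriv_le hf hCf _ _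
      _ ≤ 1 := CFL
  rw [abs_le] at hcfl
  constructor <;> simp only [laxFriedrichsWeight] <;> linarith [hcfl.1, hcfl.2]

theorem abs_laxFriedrichsStep_sub_le {M : ℝ} (hlam : 0 ≤ lam)
    (hw : ∀ i, laxFriedrichsWeight lam A f ρ i ∈ Icc 0 1) (hF : ∀ i, f (ρ i) ∈ Icc 0 M) (i : ℤ) :
    |laxFriedrichsStep lam A f ρ i - ρ i| ≤
      laxFriedrichsWeight lam A f ρ i * |ρ (i + 1) - ρ i|
        + (1 - laxFriedrichsWeight lam A f ρ (i - 1)) * |ρ i - ρ (i - 1)|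
        + (lam / 2 * M * |A (i + 1) - A i| + lam / 2 * M * |A i - A (i - 1)|) := by
  have hflux (j : ℤ) (c : ℝ) : |c * f (ρ j)| ≤ M * |c| := by
    rw [abs_mul, abs_of_nonneg (hF j).1, mul_comm]
    exact mul_le_mul_of_nonneg_right (hF j).2 (abs_nonneg c)
  have hflux_sum : |lam / 2 * ((A (i + 1) - A i) * f (ρ i) + (A i - A (i - 1)) * f (ρ (i - 1)))|
      ≤ lam / 2 * M * |A (i + 1) - A i| + lam / 2 * M * |A i - A (i - 1)| := by
    rw [abs_mul, abs_of_nonneg (by positivity : 0 ≤ lam / 2)]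
    calc lam / 2 * |(A (i + 1) - A i) * f (ρ i) + (A i - A (i - 1)) * f (ρ (i - 1))|
        ≤ lam / 2 * (M * |A (i + 1) - A i| + M * |A i - A (i - 1)|) := by
          gcongr
          exact (abs_add_le _ _).trans (add_le_add (hflux _ _) (hflux _ _))
      _ = _ := by ring
  rw [laxFriedrichsStep_sub_eq]
  refine (abs_sub _ _).trans (add_le_add ((abs_sub _ _).trans (le_of_eq ?_)) hflux_sum)
  rw [abs_mul, abs_mul, abs_of_nonneg (hw i).1, abs_of_nonneg (sub_nonneg.2 (hw (i - 1)).2)]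

end LaxFriedrichs

theorem tsum_le_tsum_add_two_mul_of_le_weighted_shift {u D w h : ℤ → ℝ} (hu : ∀ i, 0 ≤ u i)
    (hD : ∀ i, 0 ≤ D i) (hw : ∀ i, w i ∈ Icc 0 1) (hDs : Summable D) (hhs : Summable h)
    (hle : ∀ i, u i ≤ w i * D i + (1 - w (i - 1)) * D (i - 1) + (h i + h (i - 1))) :
    ∑' i, u i ≤ ∑' i, D i + 2 * ∑' i, h i := by
  have hshift {v : ℤ → ℝ} : (Summable fun i => v (i - 1)) ↔ Summable v :=
    (Equiv.subRight (1 : ℤ)).summable_iff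
  have hshift_tsum (v : ℤ → ℝ) : ∑' i, v (i - 1) = ∑' i, v i := (Equiv.subRight (1 : ℤ)).tsum_eq v
  have hwD : Summable fun i => w i * D i :=
    hDs.of_nonneg_of_le (fun i => mul_nonneg (hw i).1 (hD i))
      (fun i => mul_le_of_le_one_left (hD i) (hw i).2)
  have hwD' : Summable fun i => (1 - w i) * D i := by
    simpa only [sub_mul, one_mul] using hDs.sub hwD
  have hbound : Summable fun i => w i * D i + (1 - w (i - 1)) * D (i - 1) + (h i + h (i - 1)) :=
    (hwD.add (hshift.2 hwD')).add (hhs.add (hshift.2 hhs))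
  calc ∑' i, u i
      ≤ ∑' i, (w i * D i + (1 - w (i - 1)) * D (i - 1) + (h i + h (i - 1))) :=
        (hbound.of_nonneg_of_le hu hle).tsum_le_tsum hle hbound
    _ = ∑' i, D i + 2 * ∑' i, h i := by
        rw [hwD.add (hshift.2 hwD') |>.tsum_add (hhs.add (hshift.2 hhs)),
          hwD.tsum_add (hshift.2 hwD'), hhs.tsum_add (hshift.2 hhs),
          hshift_tsum (fun i => (1 - w i) * D i), hshift_tsum h, ← hwD.tsum_add hwD']
        simp only [← add_mul, add_sub_cancel, one_mul]
        ring

theorem hasSum_setIntegral_Ioc_mul {g : ℝ → ℝ} (hg : Integrable g) {Δx : ℝ} (hΔx : 0 < Δx) :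
    HasSum (fun i : ℤ => ∫ x in Ioc (i * Δx) ((i + 1) * Δx), g x) (∫ x, g x) := by
  have hcells : (fun i : ℤ => Ioc ((i : ℝ) * Δx) ((i + 1) * Δx)) =
      fun i => Ioc (i • Δx) ((i + 1) • Δx) := by
    simp only [zsmul_eq_mul, Int.cast_add, Int.cast_one]
  have hdisj :
      Pairwise (Function.onFun Disjoint fun i : ℤ => Ioc ((i : ℝ) * Δx) ((i + 1) * Δx)) := by
    simpa only [hcells, zero_add] using Set.pairwise_disjoint_Ioc_add_zsmul (0 : ℝ) Δx
  have hunion := iUnion_Ioc_zsmul hΔx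
  rw [← hcells] at hunion
  simpa only [hunion, setIntegral_univ] using
    hasSum_integral_iUnion (fun i => measurableSet_Ioc) hdisj (hunion ▸ hg.integrableOn)

theorem abs_sub_le_setIntegral_abs_deriv {a : ℝ → ℝ} (ha : Differentiable ℝ a)
    (ha' : Integrable (deriv a)) {x y : ℝ} (hxy : x ≤ y) :
    |a y - a x| ≤ ∫ t in Ioc x y, |deriv a t| := by
  rw [← intervalIntegral.integral_deriv_eq_sub (fun t _ => ha t) ha'.intervalIntegrable,
    ← intervalIntegral.integral_of_le hxy]
  exact intervalIntegral.abs_integral_le_integral_abs hxy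

theorem tsum_abs_sub_le_integral_abs_deriv {a : ℝ → ℝ} (ha : Differentiable ℝ a)
    (ha' : Integrable (deriv a)) {Δx : ℝ} (hΔx : 0 < Δx) :
    Summable (fun i : ℤ => |a ((i + 1) * Δx) - a (i * Δx)|) ∧
      ∑' i : ℤ, |a ((i + 1) * Δx) - a (i * Δx)| ≤ ∫ x, |deriv a x| := by
  have hK := hasSum_setIntegral_Ioc_mul ha'.abs hΔx
  have hle (i : ℤ) :
      |a ((i + 1) * Δx) - a (i * Δx)| ≤ ∫ x in Ioc (i * Δx) ((i + 1) * Δx), |deriv a x| :=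
    abs_sub_le_setIntegral_abs_deriv ha ha' (by gcongr; linarith)
  have hs := hK.summable.of_nonneg_of_le (fun i => abs_nonneg _) hle
  exact ⟨hs, hK.tsum_eq ▸ hs.tsum_le_tsum hle hK.summable⟩

theorem stmt4_general
    (f a : ℝ → ℝ) (ha : ContDiff ℝ 1 a)
    (hfC1 : ContDiff ℝ 1 f)
    (Δt Δx lam : ℝ) (hΔt : 0 < Δt) (hΔx : 0 < Δx) (hlam : lam = Δt / Δx)
    (Ca Cf' : ℝ)
    (hCa : ∀ x : ℝ, |a x| ≤ Ca)
    (hCf' : ∀ r : ℝ, |deriv f r| ≤ Cf')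
    (hf0 : f 0 = 0)
    (hfpos : ∀ r : ℝ, 0 ≤ f r)
    (ha' : Integrable (fun x => deriv a x))
    (CFL : lam * Ca * Cf' ≤ 1)
    (ρ ρ' : ℤ → ℝ)
    (hrange : ∀ i : ℤ, ρ i ∈ Set.Icc (0 : ℝ) 1)
    (hTV : Summable (fun i : ℤ => |ρ (i + 1) - ρ i|))
    (hscheme : ∀ i : ℤ, ρ' i =
      (ρ (i + 1) + ρ (i - 1)) / 2
        - lam / 2 * (a (((i : ℝ) + 1) * Δx) * f (ρ (i + 1))
            - a (((i : ℝ) - 1) * Δx) * f (ρ (i - 1)))) :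
    (∑' i : ℤ, |ρ' i - ρ i|) ≤
      (∑' i : ℤ, |ρ (i + 1) - ρ i|) + lam * Cf' * (∫ x : ℝ, |deriv a x|) := by
  have hlam0 : 0 ≤ lam := hlam ▸ by positivity
  have hf := hfC1.differentiable one_ne_zero
  set A : ℤ → ℝ := fun i => a (i * Δx)
  have hρ' : ρ' = laxFriedrichsStep lam A f ρ := by
    ext i
    simp only [hscheme, laxFriedrichsStep, A, Int.cast_add, Int.cast_sub, Int.cast_one]
  have hF (i : ℤ) : f (ρ i) ∈ Icc 0 Cf' := by
    refine ⟨hfpos _, ?_⟩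
    have := abs_sub_le_of_abs_deriv_le hf hCf' (ρ i) 0
    rw [hf0, sub_zero, sub_zero, abs_of_nonneg (hfpos _), abs_of_nonneg (hrange i).1] at this
    nlinarith [(hrange i).2, (abs_nonneg _).trans (hCf' 0)]
  have hw := laxFriedrichsWeight_mem_Icc (A := A) (ρ := ρ) hlam0 (fun i => hCa _) hf hCf' CFL
  obtain ⟨hAs, hAtsum⟩ := tsum_abs_sub_le_integral_abs_deriv (ha.differentiable one_ne_zero) ha' hΔx
  have hAs' : Summable fun i => lam / 2 * Cf' * |A (i + 1) - A i| := by
    simpa only [A, Int.cast_add, Int.cast_one] using hAs.mul_left (lam / 2 * Cf')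
  calc ∑' i, |ρ' i - ρ i|
      ≤ ∑' i, |ρ (i + 1) - ρ i| + 2 * ∑' i, lam / 2 * Cf' * |A (i + 1) - A i| := by
        refine tsum_le_tsum_add_two_mul_of_le_weighted_shift (fun i => abs_nonneg _)
          (fun i => abs_nonneg _) hw hTV hAs' fun i => ?_
        simpa only [hρ', sub_add_cancel] using abs_laxFriedrichsStep_sub_le hlam0 hw hF i
    _ ≤ ∑' i, |ρ (i + 1) - ρ i| + lam * Cf' * ∫ x, |deriv a x| := by
        rw [tsum_mul_left]
        simp only [A, Int.cast_add, Int.cast_one]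
        have hCf0 : 0 ≤ Cf' := (abs_nonneg _).trans (hCf' 0)
        linarith [mul_le_mul_of_nonneg_left hAtsum (by positivity : 0 ≤ lam * Cf')]

/-- Under the CFL condition and with `f ≥ 0`, `f(0) = 0`, the time difference
of one Lax-Friedrichs step satisfies
`Σ_i |ρ_i^{j+1} - ρ_i^j| ≤ TV(ρ^j) + λ ‖f'‖_∞ ‖a'‖_{L¹}`. -/
theorem stmt4
    (f a : ℝ → ℝ) (ha : ContDiff ℝ 1 a)
    (hfC1 : ContDiff ℝ 1 f)
    (Δt Δx lam : ℝ) (hΔt : 0 < Δt) (hΔx : 0 < Δx) (hlam : lam = Δt / Δx)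
    (Ca Cf' : ℝ)
    (hCa : ∀ x : ℝ, |a x| ≤ Ca)
    (hCf' : ∀ r : ℝ, |deriv f r| ≤ Cf')
    (hf0 : f 0 = 0)
    (hfpos : ∀ r : ℝ, 0 ≤ f r)
    (ha' : Integrable (fun x => deriv a x))
    (CFL : lam * Ca * Cf' ≤ 1)
    (ρ ρ' : ℤ → ℝ)
    (hrange : ∀ i : ℤ, ρ i ∈ Set.Icc (0 : ℝ) 1)
    (hTV : Summable (fun i : ℤ => |ρ (i + 1) - ρ i|))
    (hdiff : Summable (fun i : ℤ => |ρ' i - ρ i|))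
    (hscheme : ∀ i : ℤ, ρ' i =
      (ρ (i + 1) + ρ (i - 1)) / 2
        - lam / 2 * (a (((i : ℝ) + 1) * Δx) * f (ρ (i + 1))
            - a (((i : ℝ) - 1) * Δx) * f (ρ (i - 1)))) :
    (∑' i : ℤ, |ρ' i - ρ i|) ≤
      (∑' i : ℤ, |ρ (i + 1) - ρ i|) + lam * Cf' * (∫ x : ℝ, |deriv a x|) :=
  stmt4_general f a ha hfC1 Δt Δx lam hΔt hΔx hlam Ca Cf' hCa hCf' hf0 hfpos ha' CFL ρ ρ' hrange hTV
    hscheme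
end
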